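/- arXiv:0904.4380 — 7 statements merged into one kernel-verified Lean document; each statement's English description precedes it below -/
import Mathlib

section
/- Let z(t) = ∫₀^t ξ(t-τ)y(τ)dτ where ξ : [0,∞) → [0,∞) is absolutely continuous with ξ'(t) ≤ -ξ(0)ξ(t) a.e. and y ∈ L¹_loc(0,∞) is nonnegative. Then z is absolutely continuous, z(0) = 0, and (1/ξ(0))·z'(t) + z(t) ≤ y(t) for a.e. t > 0. -/
open MeasureTheory Set

/-!
Writing `ξ (t - τ) = ξ 0 + ∫₀^{t-τ} ξ'` and exchanging the order of integration over the
triangle `0 < τ ≤ u ≤ t` shows that `z = ξ ⋆ y` is the primitive of `z' = ξ 0 • y + ξ' ⋆ y`,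
so Lebesgue's differentiation theorem identifies `z'` as the a.e. derivative of `z`.
Since `y ≥ 0`, the bound `ξ' ≤ -ξ 0 • ξ` gives `ξ' ⋆ y ≤ -ξ 0 • z`, i.e. `z' / ξ 0 + z ≤ y`.
-/

noncomputable def causalConv (f g : ℝ → ℝ) (t : ℝ) : ℝ := ∫ τ in (0:ℝ)..t, f (t - τ) * g τ

section Fubini

variable {f g : ℝ → ℝ} {t : ℝ}

namespace causalConv

def triangle (t : ℝ) : Set (ℝ × ℝ) := {p | 0 < p.2 ∧ p.2 ≤ p.1 ∧ p.1 ≤ t}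

noncomputable def kernel (f g : ℝ → ℝ) (t : ℝ) : ℝ × ℝ → ℝ :=
  (triangle t).indicator fun p => f (p.1 - p.2) * g p.2

lemma measurableSet_triangle : MeasurableSet (triangle t) := by
  unfold triangle
  measurability

lemma kernel_eq_kernel_indicator_Icc :
    kernel f g t = kernel ((Icc 0 t).indicator f) ((Icc 0 t).indicator g) t := by
  ext ⟨u, τ⟩
  by_cases h : (u, τ) ∈ triangle t
  · have ⟨h0, hτu, hut⟩ := h
    simp only [kernel, indicator_of_mem h,
      indicator_of_mem (show u - τ ∈ Icc 0 t from ⟨by linarith, by linarith⟩),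
      indicator_of_mem (show τ ∈ Icc 0 t from ⟨h0.le, hτu.trans hut⟩)]
  · simp only [kernel, indicator_of_notMem h]

lemma integrable_kernel (hf : IntegrableOn f (Icc 0 t)) (hg : IntegrableOn g (Icc 0 t)) :
    Integrable (kernel f g t) (volume.prod volume) := by
  rw [← integrable_indicator_iff measurableSet_Icc] at hf hg
  rw [kernel_eq_kernel_indicator_Icc]
  exact (hg.convolution_integrand (ContinuousLinearMap.mul ℝ ℝ).flip hf).indicator
    measurableSet_triangle

lemma kernel_slice_fst {u : ℝ} (hu : u ∈ Ioc 0 t) :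
    (fun τ => kernel f g t (u, τ)) = (Ioc 0 u).indicator fun τ => f (u - τ) * g τ := by
  ext τ
  simp only [kernel, indicator, triangle, mem_ofPred_eq, mem_Ioc]
  split_ifs <;> grind

lemma kernel_slice_snd {τ : ℝ} (hτ : τ ∈ Ioc 0 t) :
    (fun u => kernel f g t (u, τ)) = (Icc τ t).indicator fun u => f (u - τ) * g τ := by
  ext u
  simp only [kernel, indicator, triangle, mem_ofPred_eq, mem_Icc]
  split_ifs <;> grind

lemma integral_kernel_fst (u : ℝ) :
    ∫ τ, kernel f g t (u, τ) = (Ioc 0 t).indicator (causalConv f g) u := by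
  by_cases hu : u ∈ Ioc 0 t
  · rw [indicator_of_mem hu, kernel_slice_fst hu, integral_indicator measurableSet_Ioc,
      causalConv, intervalIntegral.integral_of_le hu.1.le]
  · rw [indicator_of_notMem hu]
    refine integral_eq_zero_of_ae (.of_forall fun τ => indicator_of_notMem ?_ _)
    exact fun h => hu ⟨h.1.trans_le h.2.1, h.2.2⟩

lemma integral_kernel_snd (τ : ℝ) :
    ∫ u, kernel f g t (u, τ) =
      (Ioc 0 t).indicator (fun τ => (∫ s in (0:ℝ)..t - τ, f s) * g τ) τ := by
  by_cases hτ : τ ∈ Ioc 0 t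
  · rw [indicator_of_mem hτ, kernel_slice_snd hτ, integral_indicator measurableSet_Icc,
      integral_Icc_eq_integral_Ioc, integral_mul_const, ← intervalIntegral.integral_of_le hτ.2,
      intervalIntegral.integral_comp_sub_right, sub_self]
  · rw [indicator_of_notMem hτ]
    refine integral_eq_zero_of_ae (.of_forall fun u => indicator_of_notMem ?_ _)
    exact fun h => hτ ⟨h.1, h.2.1.trans h.2.2⟩

end causalConv

open causalConv

lemma integrableOn_Ioc_causalConv (hf : IntegrableOn f (Icc 0 t))
    (hg : IntegrableOn g (Icc 0 t)) : IntegrableOn (causalConv f g) (Ioc 0 t) := by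
  rw [← integrable_indicator_iff measurableSet_Ioc]
  simpa only [integral_kernel_fst] using (integrable_kernel hf hg).integral_prod_left

lemma integrableOn_Ioc_primitive_mul (hf : IntegrableOn f (Icc 0 t))
    (hg : IntegrableOn g (Icc 0 t)) :
    IntegrableOn (fun τ => (∫ s in (0:ℝ)..t - τ, f s) * g τ) (Ioc 0 t) := by
  rw [← integrable_indicator_iff measurableSet_Ioc]
  simpa only [integral_kernel_snd] using (integrable_kernel hf hg).integral_prod_right

lemma ae_intervalIntegrable_causalConv_integrand (hf : IntegrableOn f (Icc 0 t))
    (hg : IntegrableOn g (Icc 0 t)) :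
    ∀ᵐ u, u ∈ Ioc 0 t → IntervalIntegrable (fun τ => f (u - τ) * g τ) volume 0 u := by
  filter_upwards [(integrable_kernel hf hg).prod_right_ae] with u hu hut
  rw [kernel_slice_fst hut, integrable_indicator_iff measurableSet_Ioc] at hu
  exact (intervalIntegrable_iff_integrableOn_Ioc_of_le hut.1.le).2 hu

lemma setIntegral_Ioc_causalConv (hf : IntegrableOn f (Icc 0 t))
    (hg : IntegrableOn g (Icc 0 t)) :
    ∫ u in Ioc 0 t, causalConv f g u = ∫ τ in Ioc 0 t, (∫ s in (0:ℝ)..t - τ, f s) * g τ := by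
  simp only [← integral_indicator measurableSet_Ioc, ← integral_kernel_fst,
    ← integral_kernel_snd]
  exact integral_integral_swap (integrable_kernel hf hg)

end Fubini

section Primitive

variable {ξ ξ' y : ℝ → ℝ} {t : ℝ}

lemma comp_sub_mul_eq_of_primitive (hξ : ∀ t, 0 ≤ t → ξ t = ξ 0 + ∫ s in (0:ℝ)..t, ξ' s)
    {τ : ℝ} (hτ : τ ≤ t) :
    ξ (t - τ) * y τ = ξ 0 * y τ + (∫ s in (0:ℝ)..t - τ, ξ' s) * y τ := by
  rw [hξ _ (sub_nonneg.2 hτ)]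
  ring

lemma integrableOn_Ioc_causalConv_integrand_of_primitive
    (hξ : ∀ t, 0 ≤ t → ξ t = ξ 0 + ∫ s in (0:ℝ)..t, ξ' s)
    (hξ' : IntegrableOn ξ' (Icc 0 t)) (hy : IntegrableOn y (Icc 0 t)) :
    IntegrableOn (fun τ => ξ (t - τ) * y τ) (Ioc 0 t) :=
  IntegrableOn.congr_fun (((hy.mono_set Ioc_subset_Icc_self).const_mul (ξ 0)).add
    (integrableOn_Ioc_primitive_mul hξ' hy))
    (fun _ hτ => (comp_sub_mul_eq_of_primitive hξ hτ.2).symm) measurableSet_Ioc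

lemma causalConv_eq_integral_of_primitive (hξ : ∀ t, 0 ≤ t → ξ t = ξ 0 + ∫ s in (0:ℝ)..t, ξ' s)
    (hξ' : IntegrableOn ξ' (Icc 0 t)) (hy : IntegrableOn y (Icc 0 t)) (ht : 0 ≤ t) :
    causalConv ξ y t = ∫ s in (0:ℝ)..t, (ξ 0 * y s + causalConv ξ' y s) := by
  have hy' : IntegrableOn (fun s => ξ 0 * y s) (Ioc 0 t) :=
    (hy.mono_set Ioc_subset_Icc_self).const_mul (ξ 0)
  rw [causalConv, intervalIntegral.integral_of_le ht, intervalIntegral.integral_of_le ht,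
    integral_add hy' (integrableOn_Ioc_causalConv hξ' hy), setIntegral_Ioc_causalConv hξ' hy,
    ← integral_add hy' (integrableOn_Ioc_primitive_mul hξ' hy)]
  exact setIntegral_congr_fun measurableSet_Ioc fun τ hτ => comp_sub_mul_eq_of_primitive hξ hτ.2

end Primitive

lemma ae_restrict_Ioi_of_forall_Ioc {p : ℝ → Prop} (h : ∀ T > 0, ∀ᵐ t, t ∈ Ioc 0 T → p t) :
    ∀ᵐ t ∂volume.restrict (Ioi 0), p t := by
  have hall : ∀ᵐ t, ∀ n : ℕ, t ∈ Ioc 0 ((n : ℝ) + 1) → p t :=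
    ae_all_iff.2 fun n => h _ n.cast_add_one_pos
  filter_upwards [ae_restrict_of_ae hall, ae_restrict_mem measurableSet_Ioi] with t ht ht0
  exact ht ⌈t⌉₊ ⟨ht0, (Nat.le_ceil t).trans (lt_add_one _).le⟩

lemma ae_hasDerivAt_of_eq_integral {F f : ℝ → ℝ} (hf : ∀ T > 0, IntegrableOn f (Icc 0 T))
    (hF : ∀ t, 0 ≤ t → F t = ∫ s in (0:ℝ)..t, f s) :
    ∀ᵐ t ∂volume.restrict (Ioi 0), HasDerivAt F (f t) t := by
  refine ae_restrict_Ioi_of_forall_Ioc fun T hT => ?_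
  have hfT : IntervalIntegrable f volume 0 T :=
    (intervalIntegrable_iff_integrableOn_Icc_of_le hT.le).2 (hf T hT)
  have hIcc : Icc 0 T = uIcc 0 T := (uIcc_of_le hT.le).symm
  filter_upwards [hfT.ae_hasDerivAt_integral] with t ht htT
  refine (ht (hIcc ▸ Ioc_subset_Icc_self htT) 0 (hIcc ▸ left_mem_Icc.2 hT.le)).congr_of_eventuallyEq
    (Filter.eventuallyEq_of_mem (Ioi_mem_nhds htT.1) fun x hx => hF x (le_of_lt hx))

lemma causalConv_mono_of_ae_le {f₁ f₂ g : ℝ → ℝ} {t : ℝ} (ht : 0 ≤ t)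
    (h₁ : IntervalIntegrable (fun τ => f₁ (t - τ) * g τ) volume 0 t)
    (h₂ : IntervalIntegrable (fun τ => f₂ (t - τ) * g τ) volume 0 t)
    (hf : ∀ᵐ s ∂volume.restrict (Ioi 0), f₁ s ≤ f₂ s) (hg : ∀ τ, 0 ≤ τ → 0 ≤ g τ) :
    causalConv f₁ g t ≤ causalConv f₂ g t := by
  rw [ae_restrict_iff' measurableSet_Ioi] at hf
  have hf' := (Measure.measurePreserving_sub_left volume t).quasiMeasurePreserving.ae hf
  refine intervalIntegral.integral_mono_ae_restrict ht h₁ h₂ ?_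
  rw [Filter.EventuallyLE, ae_restrict_iff' measurableSet_Icc]
  filter_upwards [hf', Measure.ae_ne volume t] with τ hτ hτt hτI
  exact mul_le_mul_of_nonneg_right (hτ (sub_pos.2 (lt_of_le_of_ne hτI.2 hτt))) (hg τ hτI.1)

theorem stmt2_general (ξ ξ' y : ℝ → ℝ)
    (hξFTC : ∀ t, 0 ≤ t → ξ t = ξ 0 + ∫ s in (0:ℝ)..t, ξ' s)
    (hξloc : ∀ T > (0:ℝ), IntegrableOn ξ' (Icc 0 T))
    (hξineq : ∀ᵐ t ∂(volume.restrict (Ioi (0:ℝ))), ξ' t ≤ -ξ 0 * ξ t)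
    (hξ0 : 0 < ξ 0)
    (hynonneg : ∀ t, 0 ≤ t → 0 ≤ y t)
    (hyloc : ∀ T > (0:ℝ), IntegrableOn y (Icc 0 T)) :
    (fun t => ∫ τ in (0:ℝ)..t, ξ (t - τ) * y τ) 0 = 0 ∧
    ∃ z' : ℝ → ℝ,
      (∀ T > (0:ℝ), IntegrableOn z' (Icc 0 T)) ∧
      (∀ t, 0 ≤ t →
        (∫ τ in (0:ℝ)..t, ξ (t - τ) * y τ) = ∫ s in (0:ℝ)..t, z' s) ∧
      (∀ᵐ t ∂(volume.restrict (Ioi (0:ℝ))),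
        HasDerivAt (fun t => ∫ τ in (0:ℝ)..t, ξ (t - τ) * y τ) (z' t) t) ∧
      (∀ᵐ t ∂(volume.restrict (Ioi (0:ℝ))),
        (1 / ξ 0) * z' t + (∫ τ in (0:ℝ)..t, ξ (t - τ) * y τ) ≤ y t) := by
  have hz'int : ∀ T > (0:ℝ), IntegrableOn (fun s => ξ 0 * y s + causalConv ξ' y s) (Icc 0 T) :=
    fun T hT => ((hyloc T hT).const_mul _).add <| (integrableOn_Icc_iff_integrableOn_Ioc).2
      (integrableOn_Ioc_causalConv (hξloc T hT) (hyloc T hT))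
  have hFTC (t : ℝ) (ht : 0 ≤ t) :
      causalConv ξ y t = ∫ s in (0:ℝ)..t, (ξ 0 * y s + causalConv ξ' y s) := by
    rcases ht.eq_or_lt with rfl | ht
    · simp [causalConv]
    exact causalConv_eq_integral_of_primitive hξFTC (hξloc t ht) (hyloc t ht) ht.le
  refine ⟨by simp, _, hz'int, hFTC, ae_hasDerivAt_of_eq_integral hz'int hFTC, ?_⟩
  filter_upwards [ae_restrict_Ioi_of_forall_Ioc fun T hT =>
      ae_intervalIntegrable_causalConv_integrand (hξloc T hT) (hyloc T hT),
    ae_restrict_mem measurableSet_Ioi] with t hξ'y (ht : 0 < t)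
  have hξy : IntervalIntegrable (fun τ => ξ (t - τ) * y τ) volume 0 t :=
    (intervalIntegrable_iff_integrableOn_Ioc_of_le ht.le).2
      (integrableOn_Ioc_causalConv_integrand_of_primitive hξFTC (hξloc t ht) (hyloc t ht))
  have hle : causalConv ξ' y t / ξ 0 ≤ -causalConv ξ y t := by
    rw [div_le_iff₀ hξ0]
    calc causalConv ξ' y t ≤ causalConv (fun s => -ξ 0 * ξ s) y t :=
          causalConv_mono_of_ae_le ht.le hξ'y
            (by simpa only [mul_assoc] using hξy.const_mul (-ξ 0)) hξineq hynonneg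
      _ = -causalConv ξ y t * ξ 0 := by
          simp only [causalConv, mul_assoc, intervalIntegral.integral_const_mul]
          ring
  calc 1 / ξ 0 * (ξ 0 * y t + causalConv ξ' y t) + causalConv ξ y t
      = y t + (causalConv ξ' y t / ξ 0 + causalConv ξ y t) := by field_simp; ring
    _ ≤ y t := by linarith

/-- for `z(t) = ∫₀^t ξ(t-τ) y(τ) dτ` with `ξ` absolutely continuous,
nonnegative, `ξ' ≤ -ξ(0) ξ` a.e., `ξ(0) > 0`, and `y ∈ L¹_loc` nonnegative, the
function `z` is absolutely continuous (with a.e. derivative `z'` and FTC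
representation), `z(0) = 0`, and `(1/ξ(0)) z'(t) + z(t) ≤ y(t)` a.e. -/
theorem stmt2 (ξ ξ' y : ℝ → ℝ)
    (hξnonneg : ∀ t, 0 ≤ t → 0 ≤ ξ t)
    (hξderiv : ∀ᵐ t ∂(volume.restrict (Ioi (0:ℝ))), HasDerivAt ξ (ξ' t) t)
    (hξFTC : ∀ t, 0 ≤ t → ξ t = ξ 0 + ∫ s in (0:ℝ)..t, ξ' s)
    (hξloc : ∀ T > (0:ℝ), IntegrableOn ξ' (Icc 0 T))
    (hξineq : ∀ᵐ t ∂(volume.restrict (Ioi (0:ℝ))), ξ' t ≤ -ξ 0 * ξ t)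
    (hξ0 : 0 < ξ 0)
    (hynonneg : ∀ t, 0 ≤ t → 0 ≤ y t)
    (hyloc : ∀ T > (0:ℝ), IntegrableOn y (Icc 0 T)) :
    (fun t => ∫ τ in (0:ℝ)..t, ξ (t - τ) * y τ) 0 = 0 ∧
    ∃ z' : ℝ → ℝ,
      (∀ T > (0:ℝ), IntegrableOn z' (Icc 0 T)) ∧
      (∀ t, 0 ≤ t →
        (∫ τ in (0:ℝ)..t, ξ (t - τ) * y τ) = ∫ s in (0:ℝ)..t, z' s) ∧
      (∀ᵐ t ∂(volume.restrict (Ioi (0:ℝ))),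
        HasDerivAt (fun t => ∫ τ in (0:ℝ)..t, ξ (t - τ) * y τ) (z' t) t) ∧
      (∀ᵐ t ∂(volume.restrict (Ioi (0:ℝ))),
        (1 / ξ 0) * z' t + (∫ τ in (0:ℝ)..t, ξ (t - τ) * y τ) ≤ y t) :=
  stmt2_general ξ ξ' y hξFTC hξloc hξineq hξ0 hynonneg hyloc
end

section
/- Let θ_Γ, θ_c > 0 with θ_Γ ≥ θ_c, and d > 0. Suppose χ_∞ : Ω → [0,1] is measurable on a bounded measurable set Ω ⊂ ℝ³ with |Ω| > 0, and for a.e. x ∈ Ω, θ_Γ/θ_c - 1 + (d/|Ω|)·∫_Ω(1-χ_∞(x'))dx' ∈ ∂I(χ_∞(x)), where ∂I is the subdifferential of the indicator function of [0,1]. Then χ_∞ = 1 a.e. in Ω. -/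
open MeasureTheory Set

/-- The subdifferential of the indicator function of `[0,1] ⊂ ℝ` at `χ ∈ [0,1]`. -/
def subI (χ : ℝ) : Set ℝ := {η | ∀ y ∈ Icc (0:ℝ) 1, η * (y - χ) ≤ 0}

/-- for `θ_Γ ≥ θ_c` the only equilibrium phase distribution is the
pure liquid `χ_∞ = 1` a.e. -/
theorem stmt11 (Ω : Set (Fin 3 → ℝ)) (hΩmeas : MeasurableSet Ω)
    (hΩbdd : Bornology.IsBounded Ω)
    (hΩpos : 0 < volume Ω)
    (θΓ θc d : ℝ) (hθΓ : 0 < θΓ) (hθc : 0 < θc) (hord : θc ≤ θΓ) (hd : 0 < d)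
    (χ : (Fin 3 → ℝ) → ℝ) (hχmeas : Measurable χ)
    (hχrange : ∀ᵐ x ∂(volume.restrict Ω), χ x ∈ Icc (0:ℝ) 1)
    (heq : ∀ᵐ x ∂(volume.restrict Ω),
      θΓ / θc - 1 + (d / (volume Ω).toReal) * (∫ x' in Ω, (1 - χ x')) ∈
        subI (χ x)) :
    ∀ᵐ x ∂(volume.restrict Ω), χ x = 1 := by
  have hfin : volume Ω < ⊤ := hΩbdd.measure_lt_top
  have hμfin : IsFiniteMeasure (volume.restrict Ω) :=
    ⟨by simpa [Measure.restrict_apply_univ] using hfin⟩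
  -- integrability of 1 - χ on Ω
  have hint : Integrable (fun x => 1 - χ x) (volume.restrict Ω) := by
    refine Integrable.mono' (integrable_const 1) ((measurable_const.sub hχmeas).aestronglyMeasurable) ?_
    filter_upwards [hχrange] with x hx
    rw [Real.norm_eq_abs, abs_le]
    constructor <;> [linarith [hx.2]; linarith [hx.1]]
  have hnn : 0 ≤ᵐ[volume.restrict Ω] fun x => 1 - χ x := by
    filter_upwards [hχrange] with x hx
    simp only [Pi.zero_apply]
    linarith [hx.2]
  have hInn : 0 ≤ ∫ x' in Ω, (1 - χ x') := integral_nonneg_of_ae hnn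
  rcases eq_or_lt_of_le hInn with hI | hI
  · -- integral is zero, so 1 - χ = 0 a.e.
    have := (integral_eq_zero_iff_of_nonneg_ae hnn hint).mp hI.symm
    filter_upwards [this] with x hx
    have : 1 - χ x = 0 := hx
    linarith
  · -- integral positive, so η > 0
    have hA : 0 ≤ θΓ / θc - 1 := by
      have h1 : (1:ℝ) ≤ θΓ / θc := (one_le_div hθc).mpr hord
      linarith
    have hB : 0 < (d / (volume Ω).toReal) * (∫ x' in Ω, (1 - χ x')) := by
      apply mul_pos _ hI
      exact div_pos hd (ENNReal.toReal_pos hΩpos.ne' hfin.ne)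
    filter_upwards [heq, hχrange] with x hx hxr
    have h1 := hx 1 ⟨by norm_num, le_refl 1⟩
    nlinarith [hxr.2]
end

section
/- Let θ_Γ, θ_c > 0 and 0 < d < 1 with θ_Γ ≤ (1-d)·θ_c. Suppose χ_∞ : Ω → [0,1] is measurable on a bounded measurable set Ω ⊂ ℝ³ with |Ω| > 0, and for a.e. x ∈ Ω, θ_Γ/θ_c - 1 + (d/|Ω|)·∫_Ω(1-χ_∞(x'))dx' ∈ ∂I(χ_∞(x)), where ∂I is the subdifferential of the indicator function of [0,1]. Then χ_∞ = 0 a.e. in Ω. -/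
/-! The constant `η = θ_Γ/θ_c - 1 + d ⨍_Ω (1 - χ)` does not depend on `x`. If `η < 0`, testing
`η ∈ ∂I(χ(x))` against `y = 0` forces `χ(x) = 0`. Otherwise `θ_Γ ≤ (1 - d) θ_c` forces the average of `1 - χ` over `Ω` to be at least `1`;
since `1 - χ ≤ 1`, this means `1 - χ = 1` a.e. -/

open MeasureTheory Set

theorem eq_zero_of_mem_subI_of_neg {χ η : ℝ} (hχ : 0 ≤ χ) (hη : η < 0) (h : η ∈ subI χ) :
    χ = 0 := by
  have h0 := h 0 ⟨le_rfl, zero_le_one⟩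
  nlinarith

/-- A nonzero average forces integrability and a finite nonzero measure, so no junk values
intervene. -/
theorem ae_eq_const_of_ae_le_of_le_average {α : Type*} [MeasurableSpace α] {μ : Measure α}
    {g : α → ℝ} {c : ℝ} (hc : 0 < c) (hle : ∀ᵐ x ∂μ, g x ≤ c) (havg : c ≤ ⨍ x, g x ∂μ) :
    ∀ᵐ x ∂μ, g x = c := by
  have hne : (μ.real univ)⁻¹ • ∫ x, g x ∂μ ≠ 0 := average_eq μ g ▸ (hc.trans_le havg).ne'
  obtain ⟨hμ, hint⟩ := smul_ne_zero_iff.mp hne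
  have hg : Integrable g μ := Integrable.of_integral_ne_zero hint
  have hpos : 0 < μ.real univ := measureReal_nonneg.lt_of_ne' (by simpa using hμ)
  have : IsFiniteMeasure μ := ⟨lt_top_iff_ne_top.mpr (ENNReal.toReal_ne_zero.mp hpos.ne').2⟩
  have hint_eq : ∫ x, g x ∂μ = ∫ _, c ∂μ := by
    refine le_antisymm (integral_mono_ae hg (integrable_const c) hle) ?_
    rw [← measure_smul_average μ g, integral_const, smul_eq_mul, smul_eq_mul]
    exact mul_le_mul_of_nonneg_left havg hpos.le
  exact (integral_eq_iff_of_ae_le hg (integrable_const c) hle).mp hint_eq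

theorem stmt12_general (Ω : Set (Fin 3 → ℝ))
    (θΓ θc d : ℝ) (hθc : 0 < θc) (hd01 : d ∈ Ioo (0:ℝ) 1) (hord : θΓ ≤ (1 - d) * θc)
    (χ : (Fin 3 → ℝ) → ℝ)
    (hχrange : ∀ᵐ x ∂(volume.restrict Ω), χ x ∈ Icc (0:ℝ) 1)
    (heq : ∀ᵐ x ∂(volume.restrict Ω),
      θΓ / θc - 1 + (d / (volume Ω).toReal) * (∫ x' in Ω, (1 - χ x')) ∈
        subI (χ x)) :
    ∀ᵐ x ∂(volume.restrict Ω), χ x = 0 := by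
  have hratio : θΓ / θc ≤ 1 - d := (div_le_iff₀ hθc).mpr hord
  have havg : d / (volume Ω).toReal * ∫ x' in Ω, (1 - χ x') = d * ⨍ x' in Ω, (1 - χ x') := by
    rw [setAverage_eq, smul_eq_mul, measureReal_def, div_eq_mul_inv, mul_assoc]
  rcases lt_or_ge (⨍ x' in Ω, (1 - χ x')) 1 with hlt | hge
  · have hneg : θΓ / θc - 1 + d / (volume Ω).toReal * ∫ x' in Ω, (1 - χ x') < 0 := by
      rw [havg]
      linarith [mul_lt_of_lt_one_right hd01.1 hlt]
    filter_upwards [heq, hχrange] with x hx hxr using eq_zero_of_mem_subI_of_neg hxr.1 hneg hx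
  · have hle : ∀ᵐ x ∂(volume.restrict Ω), 1 - χ x ≤ 1 := by
      filter_upwards [hχrange] with x hx using by linarith [hx.1]
    filter_upwards [ae_eq_const_of_ae_le_of_le_average one_pos hle hge] with x hx
    linarith

/-- for `0 < d < 1` and `θ_Γ ≤ (1-d) θ_c`, the only equilibrium
phase distribution is the pure solid `χ_∞ = 0` a.e. -/
theorem stmt12 (Ω : Set (Fin 3 → ℝ)) (hΩmeas : MeasurableSet Ω)
    (hΩbdd : Bornology.IsBounded Ω)
    (hΩpos : 0 < volume Ω)
    (θΓ θc d : ℝ) (hθΓ : 0 < θΓ) (hθc : 0 < θc) (hd01 : d ∈ Ioo (0:ℝ) 1) (hord : θΓ ≤ (1 - d) * θc)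
    (χ : (Fin 3 → ℝ) → ℝ) (hχmeas : Measurable χ)
    (hχrange : ∀ᵐ x ∂(volume.restrict Ω), χ x ∈ Icc (0:ℝ) 1)
    (heq : ∀ᵐ x ∂(volume.restrict Ω),
      θΓ / θc - 1 + (d / (volume Ω).toReal) * (∫ x' in Ω, (1 - χ x')) ∈
        subI (χ x)) :
    ∀ᵐ x ∂(volume.restrict Ω), χ x = 0 :=
  stmt12_general Ω θΓ θc d hθc hd01 hord χ hχrange heq
end

section
/- Let θ_Γ, θ_c > 0, 0 < d, and (1-d)·θ_c < θ_Γ < θ_c. Set d* = 1 - θ_Γ/θ_c, so 0 < d* < d. Then a measurable function χ_∞ : Ω → [0,1] (Ω ⊂ ℝ³ bounded with |Ω| > 0) satisfies θ_Γ/θ_c - 1 + (d/|Ω|)·∫_Ω(1-χ_∞(x'))dx' ∈ ∂I(χ_∞(x)) for a.e. x if and only if (1/|Ω|)·∫_Ω(1-χ_∞(x'))dx' = d*/d. -/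
open MeasureTheory Set

lemma zero_mem_subI (χ : ℝ) : (0 : ℝ) ∈ subI χ := fun _ _ => by simp

lemma nonpos_of_neg_mem_subI {η χ : ℝ} (hη : η < 0) (h : η ∈ subI χ) : χ ≤ 0 := by
  have := h 0 ⟨le_rfl, zero_le_one⟩
  nlinarith

lemma one_le_of_pos_mem_subI {η χ : ℝ} (hη : 0 < η) (h : η ∈ subI χ) : 1 ≤ χ := by
  have := h 1 ⟨zero_le_one, le_rfl⟩
  nlinarith

section Integral

variable {α : Type*} [MeasurableSpace α] {μ : Measure α} {χ : α → ℝ} {η : ℝ}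

lemma integral_one_sub_eq_measureReal_univ_of_neg_mem_subI (hη : η < 0)
    (h : ∀ᵐ x ∂μ, η ∈ subI (χ x)) (hχ : ∀ᵐ x ∂μ, 0 ≤ χ x) :
    ∫ x, (1 - χ x) ∂μ = μ.real univ := by
  have hχ0 : ∀ᵐ x ∂μ, 1 - χ x = 1 := by
    filter_upwards [h, hχ] with x hx hx0
    linarith [nonpos_of_neg_mem_subI hη hx]
  simp [integral_congr_ae hχ0]

lemma integral_one_sub_eq_zero_of_pos_mem_subI (hη : 0 < η)
    (h : ∀ᵐ x ∂μ, η ∈ subI (χ x)) (hχ : ∀ᵐ x ∂μ, χ x ≤ 1) :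
    ∫ x, (1 - χ x) ∂μ = 0 := by
  have hχ1 : ∀ᵐ x ∂μ, 1 - χ x = 0 := by
    filter_upwards [h, hχ] with x hx hx1
    linarith [one_le_of_pos_mem_subI hη hx]
  simp [integral_congr_ae hχ1]

/-- Were the constant negative, `χ = 0` a.e. would make it `a + d > 0`; were it positive,
`χ = 1` a.e. would make it `a < 0`. -/
theorem ae_mem_subI_iff_eq_zero {a d : ℝ} (ha : a < 0) (had : 0 < a + d)
    (hμ : 0 < μ.real univ) (hχ : ∀ᵐ x ∂μ, χ x ∈ Icc (0 : ℝ) 1) :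
    (∀ᵐ x ∂μ, a + d / μ.real univ * ∫ x, (1 - χ x) ∂μ ∈ subI (χ x)) ↔
      a + d / μ.real univ * ∫ x, (1 - χ x) ∂μ = 0 := by
  refine ⟨fun h => ?_, fun h => .of_forall fun x => h ▸ zero_mem_subI (χ x)⟩
  rcases lt_trichotomy (a + d / μ.real univ * ∫ x, (1 - χ x) ∂μ) 0 with hneg | hzero | hpos
  · have hint := integral_one_sub_eq_measureReal_univ_of_neg_mem_subI hneg h
      (hχ.mono fun _ hx => hx.1)
    rw [hint, div_mul_cancel₀ _ hμ.ne'] at hneg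
    linarith
  · exact hzero
  · have hint := integral_one_sub_eq_zero_of_pos_mem_subI hpos h (hχ.mono fun _ hx => hx.2)
    rw [hint, mul_zero, add_zero] at hpos
    linarith

end Integral

theorem stmt13_general (Ω : Set (Fin 3 → ℝ))
    (hΩbdd : Bornology.IsBounded Ω)
    (hΩpos : 0 < volume Ω)
    (θΓ θc d : ℝ) (hθc : 0 < θc) (hd : 0 < d)
    (hlow : (1 - d) * θc < θΓ) (hhigh : θΓ < θc)
    (χ : (Fin 3 → ℝ) → ℝ)
    (hχrange : ∀ᵐ x ∂(volume.restrict Ω), χ x ∈ Icc (0:ℝ) 1) :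
    (∀ᵐ x ∂(volume.restrict Ω),
        θΓ / θc - 1 + (d / (volume Ω).toReal) * (∫ x' in Ω, (1 - χ x')) ∈
          subI (χ x)) ↔
      (1 / (volume Ω).toReal) * (∫ x' in Ω, (1 - χ x')) = (1 - θΓ / θc) / d := by
  have hvol : (volume.restrict Ω).real univ = (volume Ω).toReal :=
    measureReal_restrict_apply_univ _
  have hvol_pos : 0 < (volume Ω).toReal :=
    ENNReal.toReal_pos hΩpos.ne' hΩbdd.measure_lt_top.ne
  have ha : θΓ / θc - 1 < 0 := by linarith [(div_lt_one hθc).2 hhigh]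
  have had : 0 < θΓ / θc - 1 + d := by linarith [(lt_div_iff₀ hθc).2 hlow]
  rw [← hvol, ae_mem_subI_iff_eq_zero ha had (hvol ▸ hvol_pos) hχrange, hvol]
  constructor <;> intro h <;> field_simp at h ⊢ <;> linarith

/-- for intermediate temperatures `(1-d)θ_c < θ_Γ < θ_c`, with
`d* = 1 - θ_Γ/θ_c ∈ (0,d)`, a phase distribution `χ_∞` with values in `[0,1]`
is an equilibrium iff `(1/|Ω|) ∫_Ω (1-χ_∞) = d*/d`. -/
theorem stmt13 (Ω : Set (Fin 3 → ℝ)) (hΩmeas : MeasurableSet Ω)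
    (hΩbdd : Bornology.IsBounded Ω)
    (hΩpos : 0 < volume Ω)
    (θΓ θc d : ℝ) (hθΓ : 0 < θΓ) (hθc : 0 < θc) (hd : 0 < d)
    (hlow : (1 - d) * θc < θΓ) (hhigh : θΓ < θc)
    (χ : (Fin 3 → ℝ) → ℝ) (hχmeas : Measurable χ)
    (hχrange : ∀ᵐ x ∂(volume.restrict Ω), χ x ∈ Icc (0:ℝ) 1) :
    (∀ᵐ x ∂(volume.restrict Ω),
        θΓ / θc - 1 + (d / (volume Ω).toReal) * (∫ x' in Ω, (1 - χ x')) ∈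
          subI (χ x)) ↔
      (1 / (volume Ω).toReal) * (∫ x' in Ω, (1 - χ x')) = (1 - θΓ / θc) / d :=
  stmt13_general Ω hΩbdd hΩpos θΓ θc d hθc hd hlow hhigh χ hχrange
end

section
/- Let U₁, χ₁ and U₂, χ₂ be absolutely continuous real-valued functions on [0,t₀] with U₁(0)=U₂(0), χ₁(0)=χ₂(0), and suppose the differences U_d = U₁-U₂, χ_d = χ₁-χ₂ satisfy for a.e. t: (U_d)'·U_d + (χ_d)'·χ_d + (U_d + χ_d)² ≤ g(t)·(|U_d| + 2|χ_d|), where g ≥ 0 is locally integrable. Then (U_d²+χ_d²)^{1/2}(t) ≤ √5·∫₀^t g(τ)dτ for all t ∈ [0,t₀]. -/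
open MeasureTheory Set Real

/-- Cauchy–Schwarz: `|a| + 2|b| ≤ √5 (a² + b²)^{1/2}`. -/
lemma stmt14_cs_aux (a b : ℝ) : |a| + 2 * |b| ≤ Real.sqrt 5 * Real.sqrt (a ^ 2 + b ^ 2) := by
  have h5 : Real.sqrt 5 * Real.sqrt (a ^ 2 + b ^ 2) = Real.sqrt (5 * (a ^ 2 + b ^ 2)) :=
    (Real.sqrt_mul (by norm_num) _).symm
  have h1 : |a| + 2 * |b| = Real.sqrt ((|a| + 2 * |b|) ^ 2) :=
    (Real.sqrt_sq (by positivity)).symm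
  rw [h5, h1]
  apply Real.sqrt_le_sqrt
  have h2 : |a| ^ 2 = a ^ 2 := sq_abs a
  have h3 : |b| ^ 2 = b ^ 2 := sq_abs b
  nlinarith [sq_nonneg (2 * |a| - |b|), abs_nonneg a, abs_nonneg b]

/-- Energy identity: the square of an indefinite integral. -/
lemma stmt14_energy_aux (p : ℝ → ℝ) {t : ℝ} (ht : 0 ≤ t) (hp : IntegrableOn p (Icc 0 t)) :
    (∫ s in Ioc (0:ℝ) t, p s) ^ 2
      = 2 * ∫ s in Ioc (0:ℝ) t, p s * ∫ r in Ioc (0:ℝ) s, p r := by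
  set μ := volume.restrict (Ioc (0:ℝ) t) with hμ
  have hpI : Integrable p μ := hp.mono_set Ioc_subset_Icc_self
  set fp : ℝ → ℝ := fun s => ∫ r in Ioc (0:ℝ) s, p r with hfp
  have hcfp : ContinuousOn fp (Icc 0 t) := intervalIntegral.continuousOn_primitive hp
  set f : ℝ → ℝ → ℝ := fun s r =>
    ({z : ℝ × ℝ | z.2 ≤ z.1}).indicator (fun z => p z.1 * p z.2) (s, r) with hf
  have hmeas : MeasurableSet {z : ℝ × ℝ | z.2 ≤ z.1} :=
    measurableSet_le measurable_snd measurable_fst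
  have hint : Integrable (Function.uncurry f) (μ.prod μ) := by
    have h1 : Integrable (fun z : ℝ × ℝ => p z.1 * p z.2) (μ.prod μ) := hpI.mul_prod hpI
    have : Function.uncurry f
        = ({z : ℝ × ℝ | z.2 ≤ z.1}).indicator (fun z => p z.1 * p z.2) := by
      ext ⟨s, r⟩; rfl
    rw [this]
    exact h1.indicator hmeas
  have hswap := MeasureTheory.integral_integral_swap hint
  -- LHS of swap
  have hL : (∫ s, ∫ r, f s r ∂μ ∂μ) = ∫ s in Ioc (0:ℝ) t, p s * fp s := by
    refine setIntegral_congr_fun measurableSet_Ioc (fun s hs => ?_)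
    have h1 : (fun r => f s r) = (Iic s).indicator (fun r => p s * p r) := by
      ext r
      by_cases h : r ≤ s <;> simp [hf, Set.indicator_apply, h]
    rw [h1, integral_indicator measurableSet_Iic, Measure.restrict_restrict measurableSet_Iic]
    have h2 : Iic s ∩ Ioc 0 t = Ioc 0 s := by
      ext r; simp only [mem_inter_iff, mem_Iic, mem_Ioc]
      constructor
      · rintro ⟨h1, h2, h3⟩; exact ⟨h2, h1⟩
      · rintro ⟨h1, h2⟩; exact ⟨h2, h1, h2.trans hs.2⟩
    rw [h2, MeasureTheory.integral_const_mul]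
  -- RHS of swap
  have hR : (∫ r, ∫ s, f s r ∂μ ∂μ)
      = ∫ r in Ioc (0:ℝ) t, ((∫ s in Ioc (0:ℝ) t, p s) - fp r) * p r := by
    refine setIntegral_congr_fun measurableSet_Ioc (fun r hr => ?_)
    have h1 : (fun s => f s r) = (Ici r).indicator (fun s => p s * p r) := by
      ext s
      by_cases h : r ≤ s <;> simp [hf, Set.indicator_apply, h]
    rw [h1, integral_indicator measurableSet_Ici, Measure.restrict_restrict measurableSet_Ici]
    have h2 : Ici r ∩ Ioc 0 t = Icc r t := by
      ext s; simp only [mem_inter_iff, mem_Ici, mem_Ioc, mem_Icc]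
      constructor
      · rintro ⟨h1, _, h3⟩; exact ⟨h1, h3⟩
      · rintro ⟨h1, h2⟩; exact ⟨h1, hr.1.trans_le h1, h2⟩
    rw [h2, MeasureTheory.integral_mul_const, integral_Icc_eq_integral_Ioc]
    congr 1
    have hadd : (∫ s in (0:ℝ)..r, p s) + ∫ s in r..t, p s = ∫ s in (0:ℝ)..t, p s := by
      apply intervalIntegral.integral_add_adjacent_intervals
      · apply IntegrableOn.intervalIntegrable
        rw [uIcc_of_le hr.1.le]
        exact hp.mono_set (Icc_subset_Icc le_rfl hr.2)
      · apply IntegrableOn.intervalIntegrable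
        rw [uIcc_of_le hr.2]
        exact hp.mono_set (Icc_subset_Icc hr.1.le le_rfl)
    rw [intervalIntegral.integral_of_le hr.2, intervalIntegral.integral_of_le hr.1.le,
      intervalIntegral.integral_of_le ht] at hadd
    linarith
  rw [hL, hR] at hswap
  -- split the RHS integral
  have hfpmul : IntegrableOn (fun r => fp r * p r) (Ioc 0 t) := by
    have := hp.continuousOn_mul hcfp isCompact_Icc
    exact this.mono_set Ioc_subset_Icc_self
  have hsplit : ∫ r in Ioc (0:ℝ) t, ((∫ s in Ioc (0:ℝ) t, p s) - fp r) * p r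
      = (∫ s in Ioc (0:ℝ) t, p s) ^ 2 - ∫ r in Ioc (0:ℝ) t, fp r * p r := by
    have h1 : ∀ r, ((∫ s in Ioc (0:ℝ) t, p s) - fp r) * p r
        = (∫ s in Ioc (0:ℝ) t, p s) * p r - fp r * p r := fun r => by ring
    simp_rw [h1]
    rw [MeasureTheory.integral_sub (hpI.const_mul _) hfpmul, MeasureTheory.integral_const_mul]
    ring
  have hcomm : ∫ s in Ioc (0:ℝ) t, p s * fp s = ∫ r in Ioc (0:ℝ) t, fp r * p r := by
    simp_rw [mul_comm]
  rw [hsplit, hcomm] at hswap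
  linarith [hswap]

/-- pointwise Gronwall estimate (eg17)-(eg18): for differences
`U_d = U₁ - U₂`, `χ_d = χ₁ - χ₂` of absolutely continuous functions with equal
initial values satisfying
`U_d' U_d + χ_d' χ_d + (U_d + χ_d)² ≤ g (|U_d| + 2|χ_d|)` a.e.,
one has `(U_d² + χ_d²)^{1/2}(t) ≤ √5 ∫₀^t g`. -/
theorem stmt14 (U₁ U₂ χ₁ χ₂ U₁' U₂' χ₁' χ₂' g : ℝ → ℝ) (t₀ : ℝ) (ht₀ : 0 < t₀)
    (hU0 : U₁ 0 = U₂ 0) (hχ0 : χ₁ 0 = χ₂ 0)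
    (hU₁ : ∀ t ∈ Icc (0:ℝ) t₀, U₁ t = U₁ 0 + ∫ s in (0:ℝ)..t, U₁' s)
    (hU₂ : ∀ t ∈ Icc (0:ℝ) t₀, U₂ t = U₂ 0 + ∫ s in (0:ℝ)..t, U₂' s)
    (hχ₁ : ∀ t ∈ Icc (0:ℝ) t₀, χ₁ t = χ₁ 0 + ∫ s in (0:ℝ)..t, χ₁' s)
    (hχ₂ : ∀ t ∈ Icc (0:ℝ) t₀, χ₂ t = χ₂ 0 + ∫ s in (0:ℝ)..t, χ₂' s)
    (hU₁i : IntegrableOn U₁' (Icc 0 t₀)) (hU₂i : IntegrableOn U₂' (Icc 0 t₀))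
    (hχ₁i : IntegrableOn χ₁' (Icc 0 t₀)) (hχ₂i : IntegrableOn χ₂' (Icc 0 t₀))
    (hgnonneg : ∀ t ∈ Icc (0:ℝ) t₀, 0 ≤ g t)
    (hgint : IntegrableOn g (Icc 0 t₀))
    (hineq : ∀ᵐ t ∂(volume.restrict (Ioc (0:ℝ) t₀)),
      (U₁' t - U₂' t) * (U₁ t - U₂ t) + (χ₁' t - χ₂' t) * (χ₁ t - χ₂ t) +
          ((U₁ t - U₂ t) + (χ₁ t - χ₂ t)) ^ 2 ≤
        g t * (|U₁ t - U₂ t| + 2 * |χ₁ t - χ₂ t|)) :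
    ∀ t ∈ Icc (0:ℝ) t₀,
      Real.sqrt ((U₁ t - U₂ t) ^ 2 + (χ₁ t - χ₂ t) ^ 2) ≤
        Real.sqrt 5 * ∫ τ in (0:ℝ)..t, g τ := by
  set p : ℝ → ℝ := fun s => U₁' s - U₂' s with hpdef
  set q : ℝ → ℝ := fun s => χ₁' s - χ₂' s with hqdef
  set h : ℝ → ℝ := fun s => Real.sqrt 5 * g s with hhdef
  have hpI : IntegrableOn p (Icc 0 t₀) := hU₁i.sub hU₂i
  have hqI : IntegrableOn q (Icc 0 t₀) := hχ₁i.sub hχ₂i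
  have hhI : IntegrableOn h (Icc 0 t₀) := hgint.const_mul _
  set fp : ℝ → ℝ := fun s => ∫ r in Ioc (0:ℝ) s, p r with hfpdef
  set fq : ℝ → ℝ := fun s => ∫ r in Ioc (0:ℝ) s, q r with hfqdef
  set fh : ℝ → ℝ := fun s => ∫ r in Ioc (0:ℝ) s, h r with hfhdef
  have hcfp : ContinuousOn fp (Icc 0 t₀) := intervalIntegral.continuousOn_primitive hpI
  have hcfq : ContinuousOn fq (Icc 0 t₀) := intervalIntegral.continuousOn_primitive hqI
  have hcfh : ContinuousOn fh (Icc 0 t₀) := intervalIntegral.continuousOn_primitive hhI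
  -- transfer: differences equal the primitives
  have hu : ∀ t ∈ Icc (0:ℝ) t₀, U₁ t - U₂ t = fp t := by
    intro t ht
    have hi1 : IntervalIntegrable U₁' volume 0 t := by
      apply IntegrableOn.intervalIntegrable
      rw [uIcc_of_le ht.1]; exact hU₁i.mono_set (Icc_subset_Icc le_rfl ht.2)
    have hi2 : IntervalIntegrable U₂' volume 0 t := by
      apply IntegrableOn.intervalIntegrable
      rw [uIcc_of_le ht.1]; exact hU₂i.mono_set (Icc_subset_Icc le_rfl ht.2)
    have hsub : (∫ s in (0:ℝ)..t, p s)
        = (∫ s in (0:ℝ)..t, U₁' s) - ∫ s in (0:ℝ)..t, U₂' s :=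
      intervalIntegral.integral_sub hi1 hi2
    have h3 : fp t = ∫ s in (0:ℝ)..t, p s := (intervalIntegral.integral_of_le ht.1).symm
    rw [hU₁ t ht, hU₂ t ht, hU0, h3, hsub]; ring
  have hχ : ∀ t ∈ Icc (0:ℝ) t₀, χ₁ t - χ₂ t = fq t := by
    intro t ht
    have hi1 : IntervalIntegrable χ₁' volume 0 t := by
      apply IntegrableOn.intervalIntegrable
      rw [uIcc_of_le ht.1]; exact hχ₁i.mono_set (Icc_subset_Icc le_rfl ht.2)
    have hi2 : IntervalIntegrable χ₂' volume 0 t := by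
      apply IntegrableOn.intervalIntegrable
      rw [uIcc_of_le ht.1]; exact hχ₂i.mono_set (Icc_subset_Icc le_rfl ht.2)
    have hsub : (∫ s in (0:ℝ)..t, q s)
        = (∫ s in (0:ℝ)..t, χ₁' s) - ∫ s in (0:ℝ)..t, χ₂' s :=
      intervalIntegral.integral_sub hi1 hi2
    have h3 : fq t = ∫ s in (0:ℝ)..t, q s := (intervalIntegral.integral_of_le ht.1).symm
    rw [hχ₁ t ht, hχ₂ t ht, hχ0, h3, hsub]; ring
  have hfh0 : ∀ t ∈ Icc (0:ℝ) t₀, 0 ≤ fh t := fun t ht =>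
    setIntegral_nonneg measurableSet_Ioc (fun x hx =>
      mul_nonneg (Real.sqrt_nonneg 5) (hgnonneg x ⟨hx.1.le, hx.2.trans ht.2⟩))
  -- key claim
  have key : ∀ ε : ℝ, 0 < ε → ∀ t ∈ Icc (0:ℝ) t₀,
      fp t ^ 2 + fq t ^ 2 ≤ (fh t + ε) ^ 2 := by
    intro ε hε
    by_contra hcon
    push_neg at hcon
    obtain ⟨t', ht', hbad'⟩ := hcon
    set S : Set ℝ := {s | s ∈ Icc (0:ℝ) t₀ ∧ (fh s + ε) ^ 2 ≤ fp s ^ 2 + fq s ^ 2} with hS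
    have hSne : S.Nonempty := ⟨t', ht', hbad'.le⟩
    have hSbdd : BddBelow S := ⟨0, fun s hs => hs.1.1⟩
    have hScl : IsClosed S := by
      have hφ : ContinuousOn (fun s => fp s ^ 2 + fq s ^ 2 - (fh s + ε) ^ 2) (Icc 0 t₀) :=
        ((hcfp.pow 2).add (hcfq.pow 2)).sub ((hcfh.add continuousOn_const).pow 2)
      have hSeq : S = Icc (0:ℝ) t₀ ∩
          (fun s => fp s ^ 2 + fq s ^ 2 - (fh s + ε) ^ 2) ⁻¹' (Ici 0) := by
        ext s
        simp only [hS, mem_setOf_eq, mem_inter_iff, mem_preimage, mem_Ici]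
        constructor
        · rintro ⟨h1, h2⟩; exact ⟨h1, by linarith⟩
        · rintro ⟨h1, h2⟩; exact ⟨h1, by linarith⟩
      rw [hSeq]
      exact hφ.preimage_isClosed_of_isClosed isClosed_Icc isClosed_Ici
    set t₁ := sInf S with ht₁def
    have ht₁S : t₁ ∈ S := hScl.csInf_mem hSne hSbdd
    obtain ⟨ht₁Icc, hbad⟩ := ht₁S
    have hmin : ∀ s : ℝ, 0 < s → s < t₁ → fp s ^ 2 + fq s ^ 2 ≤ (fh s + ε) ^ 2 := by
      intro s hs0 hst
      by_contra hc
      push_neg at hc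
      have hsS : s ∈ S := ⟨⟨hs0.le, hst.le.trans ht₁Icc.2⟩, hc.le⟩
      exact absurd (csInf_le hSbdd hsS) (not_le.mpr hst)
    -- energy identities at t₁
    have hsubIcc : Icc (0:ℝ) t₁ ⊆ Icc (0:ℝ) t₀ := Icc_subset_Icc le_rfl ht₁Icc.2
    have hEp : fp t₁ ^ 2 = 2 * ∫ s in Ioc (0:ℝ) t₁, p s * fp s :=
      stmt14_energy_aux p ht₁Icc.1 (hpI.mono_set hsubIcc)
    have hEq : fq t₁ ^ 2 = 2 * ∫ s in Ioc (0:ℝ) t₁, q s * fq s :=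
      stmt14_energy_aux q ht₁Icc.1 (hqI.mono_set hsubIcc)
    have hEh : fh t₁ ^ 2 = 2 * ∫ s in Ioc (0:ℝ) t₁, h s * fh s :=
      stmt14_energy_aux h ht₁Icc.1 (hhI.mono_set hsubIcc)
    -- integrabilities on Ioc 0 t₁
    have hsub2 : Ioc (0:ℝ) t₁ ⊆ Icc (0:ℝ) t₀ :=
      Ioc_subset_Icc_self.trans hsubIcc
    have h1i : IntegrableOn (fun s => p s * fp s) (Ioc 0 t₁) :=
      (hpI.mul_continuousOn hcfp isCompact_Icc).mono_set hsub2
    have h2i : IntegrableOn (fun s => q s * fq s) (Ioc 0 t₁) :=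
      (hqI.mul_continuousOn hcfq isCompact_Icc).mono_set hsub2
    have h3i : IntegrableOn (fun s => h s * fh s) (Ioc 0 t₁) :=
      (hhI.mul_continuousOn hcfh isCompact_Icc).mono_set hsub2
    have h4i : IntegrableOn (fun s => ε * h s) (Ioc 0 t₁) :=
      (hhI.mono_set hsub2).const_mul ε
    have hsum : ∫ s in Ioc (0:ℝ) t₁, (p s * fp s + q s * fq s - (h s * fh s + ε * h s))
        = (∫ s in Ioc (0:ℝ) t₁, p s * fp s) + (∫ s in Ioc (0:ℝ) t₁, q s * fq s)
          - ((∫ s in Ioc (0:ℝ) t₁, h s * fh s) + ε * ∫ s in Ioc (0:ℝ) t₁, h s) := by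
      have hAi : IntegrableOn (fun s => p s * fp s + q s * fq s) (Ioc 0 t₁) := h1i.add h2i
      have hBi : IntegrableOn (fun s => h s * fh s + ε * h s) (Ioc 0 t₁) := h3i.add h4i
      rw [MeasureTheory.integral_sub hAi hBi,
        MeasureTheory.integral_add h1i h2i, MeasureTheory.integral_add h3i h4i,
        MeasureTheory.integral_const_mul]
    have hfht₁ : fh t₁ = ∫ s in Ioc (0:ℝ) t₁, h s := rfl
    -- the integrand is a.e. nonpositive
    have hineq' : ∀ᵐ s ∂(volume.restrict (Ioc (0:ℝ) t₁)),
        (U₁' s - U₂' s) * (U₁ s - U₂ s) + (χ₁' s - χ₂' s) * (χ₁ s - χ₂ s) +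
            ((U₁ s - U₂ s) + (χ₁ s - χ₂ s)) ^ 2 ≤
          g s * (|U₁ s - U₂ s| + 2 * |χ₁ s - χ₂ s|) :=
      ae_restrict_of_ae_restrict_of_subset (Ioc_subset_Ioc le_rfl ht₁Icc.2) hineq
    have hne : ∀ᵐ s ∂(volume.restrict (Ioc (0:ℝ) t₁)), s ≠ t₁ := by
      apply ae_restrict_of_ae
      have h0 : {s : ℝ | ¬ s ≠ t₁} = {t₁} := by ext s; simp
      rw [ae_iff, h0]
      exact Real.volume_singleton
    have hae : ∀ᵐ s ∂(volume.restrict (Ioc (0:ℝ) t₁)),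
        p s * fp s + q s * fq s - (h s * fh s + ε * h s) ≤ 0 := by
      filter_upwards [hineq', ae_restrict_mem measurableSet_Ioc, hne] with s hs1 hs2 hs3
      have hsI : s ∈ Icc (0:ℝ) t₀ := ⟨hs2.1.le, hs2.2.trans ht₁Icc.2⟩
      rw [hu s hsI, hχ s hsI] at hs1
      have hps : U₁' s - U₂' s = p s := rfl
      have hqs : χ₁' s - χ₂' s = q s := rfl
      rw [hps, hqs] at hs1
      have hslt : s < t₁ := lt_of_le_of_ne hs2.2 hs3
      have hsq : fp s ^ 2 + fq s ^ 2 ≤ (fh s + ε) ^ 2 := hmin s hs2.1 hslt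
      have hfhs : 0 ≤ fh s := hfh0 s hsI
      have hsqrt : Real.sqrt (fp s ^ 2 + fq s ^ 2) ≤ fh s + ε := by
        rw [← Real.sqrt_sq (by linarith : (0:ℝ) ≤ fh s + ε)]
        exact Real.sqrt_le_sqrt hsq
      have hcs := stmt14_cs_aux (fp s) (fq s)
      have hg0 : 0 ≤ g s := hgnonneg s hsI
      have hm1 : g s * (|fp s| + 2 * |fq s|)
          ≤ g s * (Real.sqrt 5 * Real.sqrt (fp s ^ 2 + fq s ^ 2)) :=
        mul_le_mul_of_nonneg_left hcs hg0
      have hm2 : g s * (Real.sqrt 5 * Real.sqrt (fp s ^ 2 + fq s ^ 2))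
          ≤ g s * (Real.sqrt 5 * (fh s + ε)) :=
        mul_le_mul_of_nonneg_left
          (mul_le_mul_of_nonneg_left hsqrt (Real.sqrt_nonneg 5)) hg0
      have hhs : h s = Real.sqrt 5 * g s := rfl
      rw [hhs]
      nlinarith [sq_nonneg (fp s + fq s)]
    have hle0 : ∫ s in Ioc (0:ℝ) t₁, (p s * fp s + q s * fq s - (h s * fh s + ε * h s)) ≤ 0 :=
      integral_nonpos_of_ae hae
    have hexp : (fh t₁ + ε) ^ 2
        = fh t₁ ^ 2 + 2 * ε * (∫ s in Ioc (0:ℝ) t₁, h s) + ε ^ 2 := by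
      rw [← hfht₁]; ring
    linarith [pow_pos hε 2, hbad, hEp, hEq, hEh, hsum, hle0, hexp]
  -- conclusion
  intro t ht
  rw [hu t ht, hχ t ht]
  have hfht : fh t = Real.sqrt 5 * ∫ τ in (0:ℝ)..t, g τ := by
    rw [intervalIntegral.integral_of_le ht.1]
    exact MeasureTheory.integral_const_mul _ _
  rw [← hfht]
  apply le_of_forall_pos_le_add
  intro ε hε
  have hk := key ε hε t ht
  have hfhs : 0 ≤ fh t := hfh0 t ht
  calc Real.sqrt (fp t ^ 2 + fq t ^ 2) ≤ Real.sqrt ((fh t + ε) ^ 2) := Real.sqrt_le_sqrt hk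
    _ = fh t + ε := Real.sqrt_sq (by linarith)
end

section
/- Let X : [0,∞) → [0, |Ω|] and χ(·,t) : Ω → [0,1] be measurable with X(t) = ∫_Ω(1-χ(x,t))dx, let χ* ∈ ℝ, and let A* : Ω×(0,∞) → ℝ with ‖A*(·,t)‖_{L²(Ω)} → 0 as t → ∞. Suppose A*(x,t) + X(t)/|Ω| - χ* ∈ ∂I(χ(x,t)) a.e. If χ* ≤ 0, then ∫_Ω|1-χ(x,t)|dx → 0 as t → ∞. -/
open MeasureTheory Set Filter

/-- if `A*(x,t) + X(t)/|Ω| - χ* ∈ ∂I(χ(x,t))` a.e. with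
`‖A*(·,t)‖_{L²(Ω)} → 0` and `χ* ≤ 0`, then `∫_Ω |1 - χ(x,t)| dx → 0`. -/
theorem stmt17 (Ω : Set (Fin 3 → ℝ)) (hΩmeas : MeasurableSet Ω)
    (hΩpos : 0 < volume Ω) (hΩfin : volume Ω < ⊤)
    (χ : ℝ → (Fin 3 → ℝ) → ℝ) (Astar : ℝ → (Fin 3 → ℝ) → ℝ) (χstar : ℝ)
    (hχmeas : ∀ t, Measurable (χ t))
    (hχrange : ∀ t > (0:ℝ), ∀ᵐ x ∂(volume.restrict Ω), χ t x ∈ Icc (0:ℝ) 1)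
    (hAmeas : ∀ t, Measurable (Astar t))
    (hAL2 : ∀ t > (0:ℝ), IntegrableOn (fun x => (Astar t x) ^ 2) Ω)
    (hAtend : Tendsto (fun t => ∫ x in Ω, (Astar t x) ^ 2) atTop (nhds 0))
    (hincl : ∀ t > (0:ℝ), ∀ᵐ x ∂(volume.restrict Ω),
      Astar t x + (∫ x' in Ω, (1 - χ t x')) / (volume Ω).toReal - χstar ∈
        subI (χ t x))
    (hχstar : χstar ≤ 0) :
    Tendsto (fun t => ∫ x in Ω, |1 - χ t x|) atTop (nhds 0) := by
  haveI : IsFiniteMeasure (volume.restrict Ω) :=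
    ⟨by rwa [Measure.restrict_apply_univ]⟩
  set C := (volume Ω).toReal with hCdef
  have hC : 0 < C := ENNReal.toReal_pos hΩpos.ne' hΩfin.ne
  set g : ℝ → ℝ := fun t => ∫ x in Ω, (Astar t x) ^ 2 with hg
  set b : ℝ → ℝ := fun t => Real.sqrt (C * (Real.sqrt (g t) * Real.sqrt C)) with hb
  have key : ∀ t > (0:ℝ),
      0 ≤ (∫ x in Ω, |1 - χ t x|) ∧ (∫ x in Ω, |1 - χ t x|) ≤ b t := by
    intro t ht
    have hrange := hχrange t ht
    set X : ℝ := ∫ x in Ω, (1 - χ t x) with hXdef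
    -- integrability of 1 - χ
    have hInt1 : IntegrableOn (fun x => 1 - χ t x) Ω := by
      refine (integrable_const (1:ℝ)).mono'
        ((measurable_const.sub (hχmeas t)).aestronglyMeasurable) ?_
      filter_upwards [hrange] with x hx
      rw [Real.norm_eq_abs, abs_of_nonneg (by linarith [hx.2])]
      linarith [hx.1]
    have hX0 : 0 ≤ X :=
      integral_nonneg_of_ae (hrange.mono fun x hx => by simp; linarith [hx.2])
    have habs : (∫ x in Ω, |1 - χ t x|) = X :=
      integral_congr_ae (hrange.mono fun x hx => abs_of_nonneg (by linarith [hx.2]))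
    -- integrability of |A*|
    have hIntA : IntegrableOn (fun x => |Astar t x|) Ω := by
      refine ((hAL2 t ht).add (integrable_const 1)).mono'
        ((hAmeas t).abs.aestronglyMeasurable) ?_
      refine Eventually.of_forall fun x => ?_
      simp only [Pi.add_apply, Real.norm_eq_abs, abs_abs]
      nlinarith [sq_nonneg (|Astar t x| - 1), sq_abs (Astar t x), abs_nonneg (Astar t x)]
    -- pointwise estimate from the subdifferential inclusion with y = 1
    have hpt : ∀ᵐ x ∂(volume.restrict Ω),
        (X / C - χstar) * (1 - χ t x) ≤ |Astar t x| := by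
      filter_upwards [hincl t ht, hrange] with x hx hxr
      have h1 := hx 1 ⟨zero_le_one, le_refl 1⟩
      have h0 : 0 ≤ 1 - χ t x := by linarith [hxr.2]
      have h1' : 1 - χ t x ≤ 1 := by linarith [hxr.1]
      have habs' : -(Astar t x) * (1 - χ t x) ≤ |Astar t x| := by
        nlinarith [abs_nonneg (Astar t x), neg_abs_le (Astar t x), le_abs_self (Astar t x)]
      nlinarith [h1, habs']
    -- integrate
    have hI : (X / C - χstar) * X ≤ ∫ x in Ω, |Astar t x| := by
      have := integral_mono_ae (hInt1.const_mul (X / C - χstar)) hIntA hpt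
      rwa [integral_const_mul] at this
    have hXsq : X ^ 2 / C ≤ ∫ x in Ω, |Astar t x| := by
      have hexp : (X / C - χstar) * X = X ^ 2 / C + (-χstar) * X := by ring
      have hpos : 0 ≤ (-χstar) * X := mul_nonneg (by linarith) hX0
      rw [hexp] at hI
      linarith
    -- Cauchy–Schwarz
    have hCS : (∫ x in Ω, |Astar t x|) ≤ Real.sqrt (g t) * Real.sqrt C := by
      have hpq : (2:ℝ).HolderConjugate 2 := ⟨by norm_num, by norm_num, by norm_num⟩
      have hfm : MemLp (fun x => |Astar t x|) (ENNReal.ofReal 2) (volume.restrict Ω) := by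
        rw [show ENNReal.ofReal 2 = 2 by norm_num]
        refine (memLp_two_iff_integrable_sq
          ((hAmeas t).abs.aestronglyMeasurable)).2 ?_
        simpa [sq_abs, IntegrableOn] using hAL2 t ht
      have hgm : MemLp (fun _ : Fin 3 → ℝ => (1:ℝ)) (ENNReal.ofReal 2)
          (volume.restrict Ω) := memLp_const 1
      have := integral_mul_le_Lp_mul_Lq_of_nonneg hpq
        (Eventually.of_forall fun x => abs_nonneg (Astar t x))
        (Eventually.of_forall fun _ => zero_le_one) hfm hgm
      simp only [mul_one, Real.one_rpow, Real.rpow_two, sq_abs, one_pow] at this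
      have h1 : (∫ x in Ω, Astar t x ^ 2) = g t := rfl
      have h2 : (∫ _x in Ω, (1:ℝ)) = C := by
        simp [hCdef, Measure.real]
      rw [h1, h2] at this
      calc (∫ x in Ω, |Astar t x|) ≤ g t ^ (1/(2:ℝ)) * C ^ (1/(2:ℝ)) := this
        _ = Real.sqrt (g t) * Real.sqrt C := by
            rw [Real.sqrt_eq_rpow, Real.sqrt_eq_rpow]
    -- combine
    refine ⟨habs ▸ hX0, ?_⟩
    rw [habs]
    have hg0 : 0 ≤ g t := integral_nonneg fun x => sq_nonneg _
    show X ≤ Real.sqrt (C * (Real.sqrt (g t) * Real.sqrt C))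
    rw [Real.le_sqrt hX0
      (mul_nonneg hC.le (mul_nonneg (Real.sqrt_nonneg _) (Real.sqrt_nonneg _)))]
    have : X ^ 2 ≤ C * (∫ x in Ω, |Astar t x|) := by
      have := hXsq
      calc X ^ 2 = C * (X ^ 2 / C) := by field_simp
        _ ≤ C * ∫ x in Ω, |Astar t x| := by
            exact mul_le_mul_of_nonneg_left hXsq hC.le
    calc X ^ 2 ≤ C * (∫ x in Ω, |Astar t x|) := this
      _ ≤ C * (Real.sqrt (g t) * Real.sqrt C) :=
          mul_le_mul_of_nonneg_left hCS hC.le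
  -- squeeze
  have hbt : Tendsto b atTop (nhds 0) := by
    have hcont : Continuous fun u : ℝ => Real.sqrt (C * (Real.sqrt u * Real.sqrt C)) :=
      Real.continuous_sqrt.comp
        (continuous_const.mul (Real.continuous_sqrt.mul continuous_const))
    have := (hcont.tendsto 0).comp hAtend
    simp only [Real.sqrt_zero, zero_mul, mul_zero] at this
    exact this
  refine tendsto_of_tendsto_of_tendsto_of_le_of_le' tendsto_const_nhds hbt ?_ ?_
  · filter_upwards [eventually_gt_atTop (0:ℝ)] with t ht using (key t ht).1
  · filter_upwards [eventually_gt_atTop (0:ℝ)] with t ht using (key t ht).2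
end

section
/- Let (η,ζ) ∈ L²(Ω)×L²(Ω) and (U,χ) ∈ L²(Ω)×L²(Ω) with χ(x) ∈ [0,1] a.e. Then (η,ζ) belongs to the subdifferential ∂ψ(U,χ) of the functional ψ from the previous context if and only if η = U + χ - θ_Γ + K_Γ·∫_Ω U dx + p₀ a.e. and ζ(x) ∈ U(x) + χ(x) + 1 - 2θ_Γ + ∂I(χ(x)) a.e., where ∂I is the subdifferential of the indicator function of [0,1] on ℝ. -/
open MeasureTheory Set Classical

/-- The functional `ψ(U,χ) = ∫_Ω [½(U+χ-1)² + (U+2χ)(1-θ_Γ) + I(χ)] dx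
+ (K_Γ/2)(∫_Ω U dx + p₀/K_Γ)² + C_ψ` on `H = L²(Ω) × L²(Ω)`. -/
noncomputable def psi (Ω : Set (Fin 3 → ℝ)) (KΓ p₀ θΓ Cψ : ℝ)
    (v : Lp ℝ 2 (volume.restrict Ω) × Lp ℝ 2 (volume.restrict Ω)) : EReal :=
  if (∀ᵐ x ∂(volume.restrict Ω), v.2 x ∈ Icc (0:ℝ) 1) then
    (((∫ x, ((1 / 2) * (v.1 x + v.2 x - 1) ^ 2 + (v.1 x + 2 * v.2 x) * (1 - θΓ))
          ∂(volume.restrict Ω)) +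
      (KΓ / 2) * ((∫ x, v.1 x ∂(volume.restrict Ω)) + p₀ / KΓ) ^ 2 + Cψ : ℝ) : EReal)
  else ⊤

/-!
On its effective domain `ψ` is a quadratic functional on `L² × L²` (write `∫ U = ⟪1, U⟫`):
`ψ(U + v, χ + ξ) = ψ(U, χ) + ⟪a, v⟫ + ⟪b, ξ⟫ + R(v, ξ)` with `a = U + χ - θ_Γ + K_Γ ∫ U + p₀`,
`b = U + χ + 1 - 2θ_Γ` and the nonnegative quadratic form `R(v, ξ) = ½‖v + ξ‖² + (K_Γ/2)(∫ v)²`.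
Scaling the test directions by `t → 0⁺` kills `R`, so `(η, ζ) ∈ ∂ψ(U, χ)` iff `η = a` and `ζ - b`
lies in the normal cone of `{0 ≤ Ξ ≤ 1}` at `χ`. Testing that normal cone inequality with `Ξ = y`
on `{ρ (y - χ) > 0}` and `Ξ = χ` elsewhere, for `y = 0, 1`, localizes it to `ρ(x) ∈ ∂I(χ(x))`.
-/

lemma nonpos_of_forall_mul_le_sq_mul {a b : ℝ} (h : ∀ t ∈ Ioc (0 : ℝ) 1, t * a ≤ t ^ 2 * b) :
    a ≤ 0 := by
  have hlim : Filter.Tendsto (fun t : ℝ => t * b) (nhdsWithin 0 (Ioi 0)) (nhds 0) := by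
    simpa using
      (tendsto_nhdsWithin_of_tendsto_nhds (Filter.tendsto_id (x := nhds (0 : ℝ)))).mul_const b
  refine ge_of_tendsto hlim ?_
  filter_upwards [Ioc_mem_nhdsGT zero_lt_one] with t ht
  refine le_of_mul_le_mul_left ?_ ht.1
  linarith [h t ht]

section InnerProductSpace

variable {E : Type*} [NormedAddCommGroup E] [InnerProductSpace ℝ E]

theorem forall_add_inner_le_iff_of_expansion {C : Set E} (hC : Convex ℝ C)
    {f R : E → E → ℝ} {U χ a b η ζ : E} (hχ : χ ∈ C)
    (hf : ∀ v ξ, f (U + v) (χ + ξ) = f U χ + inner ℝ a v + inner ℝ b ξ + R v ξ)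
    (hR_nonneg : ∀ v ξ, 0 ≤ R v ξ) (hR_smul : ∀ (t : ℝ) v ξ, R (t • v) (t • ξ) = t ^ 2 * R v ξ) :
    (∀ V, ∀ Ξ ∈ C, f U χ + (inner ℝ η (V - U) + inner ℝ ζ (Ξ - χ)) ≤ f V Ξ) ↔
      η = a ∧ ∀ Ξ ∈ C, inner ℝ (ζ - b) (Ξ - χ) ≤ 0 := by
  have hgap : ∀ v ξ, inner ℝ (η - a) v + inner ℝ (ζ - b) ξ ≤ R v ξ ↔
      f U χ + (inner ℝ η v + inner ℝ ζ ξ) ≤ f (U + v) (χ + ξ) := by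
    intro v ξ
    rw [hf, inner_sub_left, inner_sub_left]
    constructor <;> intro h <;> linarith
  constructor
  · intro h
    have hgap' : ∀ v, ∀ Ξ ∈ C, inner ℝ (η - a) v + inner ℝ (ζ - b) (Ξ - χ) ≤ R v (Ξ - χ) := by
      intro v Ξ hΞ
      simpa [hgap] using h (U + v) Ξ hΞ
    refine ⟨?_, fun Ξ hΞ => nonpos_of_forall_mul_le_sq_mul (b := R 0 (Ξ - χ)) fun t ht => ?_⟩
    · suffices ∀ w, inner ℝ (η - a) w ≤ 0 from
        sub_eq_zero.1 (real_inner_self_nonpos.1 (this (η - a)))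
      intro w
      refine nonpos_of_forall_mul_le_sq_mul (b := R w 0) fun t _ => ?_
      have := hgap' (t • w) χ hχ
      rwa [sub_self, inner_zero_right, add_zero, inner_smul_right, ← smul_zero t, hR_smul] at this
    · have hmem : χ + t • (Ξ - χ) ∈ C := hC.add_smul_sub_mem hχ hΞ ⟨ht.1.le, ht.2⟩
      have := hgap' 0 _ hmem
      rwa [add_sub_cancel_left, inner_zero_right, zero_add, inner_smul_right, ← smul_zero t,
        hR_smul] at this
  · rintro ⟨rfl, hζ⟩ V Ξ hΞ
    have := (hgap (V - U) (Ξ - χ)).1 (by simpa using (hζ Ξ hΞ).trans (hR_nonneg _ _))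
    simpa using this

/-- `ψ` on its effective domain, with the constant function `1` abstracted to a vector `e`. -/
noncomputable def psiQuad (e : E) (KΓ p₀ θΓ Cψ : ℝ) (V Ξ : E) : ℝ :=
  ‖V + Ξ - e‖ ^ 2 / 2 + (1 - θΓ) * inner ℝ e (V + (2 : ℝ) • Ξ) +
    KΓ / 2 * (inner ℝ e V + p₀ / KΓ) ^ 2 + Cψ

lemma psiQuad_add_add (e : E) {KΓ : ℝ} (hKΓ : KΓ ≠ 0) (p₀ θΓ Cψ : ℝ) (U χ v ξ : E) :
    psiQuad e KΓ p₀ θΓ Cψ (U + v) (χ + ξ) =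
      psiQuad e KΓ p₀ θΓ Cψ U χ + inner ℝ (U + χ + (KΓ * inner ℝ e U + p₀ - θΓ) • e) v +
        inner ℝ (U + χ + (1 - 2 * θΓ) • e) ξ + (‖v + ξ‖ ^ 2 / 2 + KΓ / 2 * inner ℝ e v ^ 2) := by
  have hsplit : U + v + (χ + ξ) - e = (U + χ - e) + (v + ξ) := by abel
  simp only [psiQuad, hsplit, norm_add_sq_real, inner_add_left, inner_add_right, inner_sub_left,
    inner_smul_left, inner_smul_right, RCLike.conj_to_real]
  field_simp
  ring

lemma psiQuad_remainder_smul (e : E) (KΓ t : ℝ) (v ξ : E) :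
    ‖t • v + t • ξ‖ ^ 2 / 2 + KΓ / 2 * inner ℝ e (t • v) ^ 2 =
      t ^ 2 * (‖v + ξ‖ ^ 2 / 2 + KΓ / 2 * inner ℝ e v ^ 2) := by
  rw [← smul_add, norm_smul, inner_smul_right, Real.norm_eq_abs, mul_pow, sq_abs]
  ring

end InnerProductSpace

lemma mem_subI_of_endpoints {ρ c : ℝ} (h0 : ρ * (0 - c) ≤ 0) (h1 : ρ * (1 - c) ≤ 0) :
    ρ ∈ subI c := fun y hy => by
  nlinarith [mul_nonneg hy.1 (neg_nonneg.2 h1), mul_nonneg (sub_nonneg.2 hy.2) (neg_nonneg.2 h0)]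

section L2

variable {α : Type*} [MeasurableSpace α] {μ : Measure α}

def unitIntervalValued (μ : Measure α) : Set (Lp ℝ 2 μ) := {Ξ | ∀ᵐ x ∂μ, Ξ x ∈ Icc (0 : ℝ) 1}

lemma mem_unitIntervalValued {Ξ : Lp ℝ 2 μ} :
    Ξ ∈ unitIntervalValued μ ↔ ∀ᵐ x ∂μ, Ξ x ∈ Icc (0 : ℝ) 1 := Iff.rfl

lemma convex_unitIntervalValued : Convex ℝ (unitIntervalValued μ) := by
  intro f hf g hg s t hs ht hst
  filter_upwards [hf, hg, Lp.coeFn_add (s • f) (t • g), Lp.coeFn_smul s f, Lp.coeFn_smul t g]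
    with x hfx hgx hadd hsf htg
  rw [hadd, Pi.add_apply, hsf, htg]
  exact convex_Icc 0 1 hfx hgx hs ht hst

variable [IsFiniteMeasure μ]

lemma ae_mul_sub_nonpos_of_forall_inner_nonpos {ρ χ : Lp ℝ 2 μ} (hχ : χ ∈ unitIntervalValued μ)
    (h : ∀ Ξ ∈ unitIntervalValued μ, inner ℝ ρ (Ξ - χ) ≤ 0) {y : ℝ} (hy : y ∈ Icc (0 : ℝ) 1) :
    ∀ᵐ x ∂μ, ρ x * (y - χ x) ≤ 0 := by
  set A := {x | 0 < ρ x * (y - χ x)}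
  have hA : MeasurableSet A := measurableSet_lt measurable_const
    ((Lp.stronglyMeasurable ρ).measurable.mul
      (measurable_const.sub (Lp.stronglyMeasurable χ).measurable))
  have hg : MemLp (A.indicator fun x => y - χ x) 2 μ :=
    ((memLp_const y).sub (Lp.memLp χ)).indicator hA
  -- the competitor equal to `y` on `A` and to `χ` off `A`
  have hΞ : χ + hg.toLp _ ∈ unitIntervalValued μ := by
    filter_upwards [hχ, Lp.coeFn_add χ (hg.toLp _), hg.coeFn_toLp] with x hχx hadd hgx
    rw [hadd, Pi.add_apply, hgx]
    by_cases hx : x ∈ A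
    · simpa [indicator_of_mem hx] using hy
    · simpa [indicator_of_notMem hx] using hχx
  have hae : (fun x => inner ℝ (ρ x) (hg.toLp _ x)) =ᵐ[μ] A.indicator fun x => ρ x * (y - χ x) := by
    filter_upwards [hg.coeFn_toLp] with x hx
    by_cases hxA : x ∈ A <;> simp [hx, hxA, mul_comm]
  have hnonneg : 0 ≤ A.indicator fun x => ρ x * (y - χ x) := indicator_nonneg fun x hx => hx.le
  have hint_nonpos : ∫ x, A.indicator (fun x => ρ x * (y - χ x)) x ∂μ ≤ 0 := by
    have := h _ hΞ
    rwa [add_sub_cancel_left, L2.inner_def, integral_congr_ae hae] at this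
  have hzero := (integral_eq_zero_iff_of_nonneg hnonneg ((L2.integrable_inner ρ _).congr hae)).1
    (le_antisymm hint_nonpos (integral_nonneg hnonneg))
  filter_upwards [hzero] with x hx
  by_contra hpos
  have hxA : x ∈ A := lt_of_not_ge hpos
  simp only [indicator_of_mem hxA, Pi.zero_apply] at hx
  exact hpos hx.le

theorem forall_inner_sub_nonpos_iff_ae_mem_subI {ρ χ : Lp ℝ 2 μ}
    (hχ : χ ∈ unitIntervalValued μ) :
    (∀ Ξ ∈ unitIntervalValued μ, inner ℝ ρ (Ξ - χ) ≤ 0) ↔ ∀ᵐ x ∂μ, ρ x ∈ subI (χ x) := by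
  constructor
  · intro h
    filter_upwards [ae_mul_sub_nonpos_of_forall_inner_nonpos hχ h ⟨le_rfl, zero_le_one⟩,
      ae_mul_sub_nonpos_of_forall_inner_nonpos hχ h ⟨zero_le_one, le_rfl⟩] with x h0 h1
    exact mem_subI_of_endpoints h0 h1
  · intro h Ξ hΞ
    rw [L2.inner_def]
    refine integral_nonpos_of_ae ?_
    filter_upwards [h, hΞ, Lp.coeFn_sub Ξ χ] with x hx hΞx hsub
    rw [hsub, Pi.sub_apply, RCLike.inner_apply, conj_trivial, mul_comm]
    exact hx _ hΞx

lemma integral_eq_inner_const_one (f : Lp ℝ 2 μ) :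
    ∫ x, f x ∂μ = inner ℝ (Lp.const 2 μ (1 : ℝ)) f := by
  rw [← indicatorConstLp_univ, L2.inner_indicatorConstLp_one, Measure.restrict_univ]

lemma coeFn_add_add_smul_const_one (U χ : Lp ℝ 2 μ) (c : ℝ) :
    ⇑(U + χ + c • Lp.const 2 μ (1 : ℝ)) =ᵐ[μ] fun x => U x + χ x + c := by
  filter_upwards [Lp.coeFn_add (U + χ) (c • Lp.const 2 μ (1 : ℝ)), Lp.coeFn_add U χ,
    Lp.coeFn_smul c (Lp.const 2 μ (1 : ℝ)), Lp.coeFn_const 2 μ (1 : ℝ)] with x h1 h2 h3 h4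
  rw [h1, Pi.add_apply, h2, h3, Pi.add_apply, Pi.smul_apply, h4, Function.const_apply,
    smul_eq_mul, mul_one]

lemma integral_half_sq_add_mul_eq (V Ξ : Lp ℝ 2 μ) (θ : ℝ) :
    ∫ x, ((1 / 2) * (V x + Ξ x - 1) ^ 2 + (V x + 2 * Ξ x) * (1 - θ)) ∂μ =
      ‖V + Ξ - Lp.const 2 μ (1 : ℝ)‖ ^ 2 / 2 +
        (1 - θ) * inner ℝ (Lp.const 2 μ (1 : ℝ)) (V + (2 : ℝ) • Ξ) := by
  set W := V + Ξ - Lp.const 2 μ (1 : ℝ)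
  set Z := V + (2 : ℝ) • Ξ
  rw [← real_inner_self_eq_norm_sq, L2.inner_def, ← integral_eq_inner_const_one,
    ← integral_div, ← integral_const_mul, ← integral_add ((L2.integrable_inner W W).div_const 2)
      (((Lp.memLp Z).integrable one_le_two).const_mul _)]
  refine integral_congr_ae ?_
  filter_upwards [Lp.coeFn_sub (V + Ξ) (Lp.const 2 μ (1 : ℝ)), Lp.coeFn_add V Ξ,
    Lp.coeFn_const 2 μ (1 : ℝ), Lp.coeFn_add V ((2 : ℝ) • Ξ), Lp.coeFn_smul (2 : ℝ) Ξ]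
    with x h1 h2 h3 h4 h5
  simp only [W, Z, h1, h2, h3, h4, h5, Pi.add_apply, Pi.sub_apply, Pi.smul_apply,
    Function.const_apply, smul_eq_mul, RCLike.inner_apply, conj_trivial]
  ring

end L2

section Psi

variable (Ω : Set (Fin 3 → ℝ)) [IsFiniteMeasure (volume.restrict Ω)] (KΓ p₀ θΓ Cψ : ℝ)

lemma psi_eq_psiQuad {V Ξ : Lp ℝ 2 (volume.restrict Ω)}
    (hΞ : Ξ ∈ unitIntervalValued (volume.restrict Ω)) :
    psi Ω KΓ p₀ θΓ Cψ (V, Ξ) =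
      psiQuad (Lp.const 2 (volume.restrict Ω) (1 : ℝ)) KΓ p₀ θΓ Cψ V Ξ := by
  rw [psi, if_pos (mem_unitIntervalValued.1 hΞ), integral_half_sq_add_mul_eq,
    integral_eq_inner_const_one, psiQuad]

lemma forall_psi_add_inner_le_iff {U χ : Lp ℝ 2 (volume.restrict Ω)}
    (hχ : χ ∈ unitIntervalValued (volume.restrict Ω)) (η ζ : Lp ℝ 2 (volume.restrict Ω)) :
    (∀ V Ξ : Lp ℝ 2 (volume.restrict Ω), psi Ω KΓ p₀ θΓ Cψ (U, χ) +
        (((inner ℝ η (V - U) : ℝ) + (inner ℝ ζ (Ξ - χ) : ℝ) : ℝ) : EReal) ≤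
          psi Ω KΓ p₀ θΓ Cψ (V, Ξ)) ↔
      ∀ V, ∀ Ξ ∈ unitIntervalValued (volume.restrict Ω),
        psiQuad (Lp.const 2 (volume.restrict Ω) (1 : ℝ)) KΓ p₀ θΓ Cψ U χ +
            (inner ℝ η (V - U) + inner ℝ ζ (Ξ - χ)) ≤
          psiQuad (Lp.const 2 (volume.restrict Ω) (1 : ℝ)) KΓ p₀ θΓ Cψ V Ξ := by
  refine forall_congr' fun V => ⟨fun h Ξ hΞ => ?_, fun h Ξ => ?_⟩
  · have := h Ξ
    rwa [psi_eq_psiQuad Ω KΓ p₀ θΓ Cψ hχ, psi_eq_psiQuad Ω KΓ p₀ θΓ Cψ hΞ, ← EReal.coe_add,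
      EReal.coe_le_coe_iff] at this
  · by_cases hΞ : Ξ ∈ unitIntervalValued (volume.restrict Ω)
    · rw [psi_eq_psiQuad Ω KΓ p₀ θΓ Cψ hχ, psi_eq_psiQuad Ω KΓ p₀ θΓ Cψ hΞ, ← EReal.coe_add,
        EReal.coe_le_coe_iff]
      exact h Ξ hΞ
    · have hψ : psi Ω KΓ p₀ θΓ Cψ (V, Ξ) = ⊤ := if_neg (mt mem_unitIntervalValued.2 hΞ)
      exact hψ ▸ le_top

end Psi

theorem stmt19_general (Ω : Set (Fin 3 → ℝ))
    (hΩbdd : Bornology.IsBounded Ω)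
    (KΓ p₀ θΓ Cψ : ℝ) (hKΓ : 0 < KΓ)
    (U χ η ζ : Lp ℝ 2 (volume.restrict Ω))
    (hχrange : ∀ᵐ x ∂(volume.restrict Ω), χ x ∈ Icc (0:ℝ) 1) :
    (∀ V Ξ : Lp ℝ 2 (volume.restrict Ω),
        psi Ω KΓ p₀ θΓ Cψ (U, χ) +
            (((inner ℝ η (V - U) : ℝ) + (inner ℝ ζ (Ξ - χ) : ℝ) : ℝ) : EReal) ≤
          psi Ω KΓ p₀ θΓ Cψ (V, Ξ)) ↔
      ((∀ᵐ x ∂(volume.restrict Ω),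
          η x = U x + χ x - θΓ + KΓ * (∫ x', U x' ∂(volume.restrict Ω)) + p₀) ∧
        (∀ᵐ x ∂(volume.restrict Ω),
          ζ x - (U x + χ x + 1 - 2 * θΓ) ∈ subI (χ x))) := by
  have : IsFiniteMeasure (volume.restrict Ω) :=
    isFiniteMeasure_restrict.2 hΩbdd.measure_lt_top.ne
  set e := Lp.const 2 (volume.restrict Ω) (1 : ℝ)
  rw [forall_psi_add_inner_le_iff Ω KΓ p₀ θΓ Cψ hχrange,
    forall_add_inner_le_iff_of_expansion convex_unitIntervalValued hχrange
      (psiQuad_add_add e hKΓ.ne' p₀ θΓ Cψ U χ) (fun v ξ => by positivity)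
      (psiQuad_remainder_smul e KΓ),
    forall_inner_sub_nonpos_iff_ae_mem_subI hχrange, Lp.ext_iff, integral_eq_inner_const_one]
  refine and_congr (Filter.eventually_congr ?_) (Filter.eventually_congr ?_)
  · filter_upwards [coeFn_add_add_smul_const_one U χ (KΓ * inner ℝ e U + p₀ - θΓ)] with x hx
    rw [hx]
    constructor <;> intro h <;> linarith
  · filter_upwards [Lp.coeFn_sub ζ (U + χ + (1 - 2 * θΓ) • e),
      coeFn_add_add_smul_const_one U χ (1 - 2 * θΓ)] with x hsub hx
    rw [hsub, Pi.sub_apply, hx, add_sub_assoc]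

/-- characterization (eg7) of the subdifferential of `ψ`: for
`χ ∈ [0,1]` a.e., `(η,ζ) ∈ ∂ψ(U,χ)` iff
`η = U + χ - θ_Γ + K_Γ ∫_Ω U + p₀` a.e. and
`ζ ∈ U + χ + 1 - 2θ_Γ + ∂I(χ)` a.e. -/
theorem stmt19 (Ω : Set (Fin 3 → ℝ)) (hΩmeas : MeasurableSet Ω)
    (hΩbdd : Bornology.IsBounded Ω) (hΩpos : 0 < volume Ω)
    (KΓ p₀ θΓ Cψ : ℝ) (hKΓ : 0 < KΓ)
    (U χ η ζ : Lp ℝ 2 (volume.restrict Ω))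
    (hχrange : ∀ᵐ x ∂(volume.restrict Ω), χ x ∈ Icc (0:ℝ) 1) :
    (∀ V Ξ : Lp ℝ 2 (volume.restrict Ω),
        psi Ω KΓ p₀ θΓ Cψ (U, χ) +
            (((inner ℝ η (V - U) : ℝ) + (inner ℝ ζ (Ξ - χ) : ℝ) : ℝ) : EReal) ≤
          psi Ω KΓ p₀ θΓ Cψ (V, Ξ)) ↔
      ((∀ᵐ x ∂(volume.restrict Ω),
          η x = U x + χ x - θΓ + KΓ * (∫ x', U x' ∂(volume.restrict Ω)) + p₀) ∧
        (∀ᵐ x ∂(volume.restrict Ω),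
          ζ x - (U x + χ x + 1 - 2 * θΓ) ∈ subI (χ x))) :=
  stmt19_general Ω hΩbdd KΓ p₀ θΓ Cψ hKΓ U χ η ζ hχrange
end
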